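/- arXiv:2409.16253 — 2 statements merged into one kernel-verified Lean document; each statement's English description precedes it below -/
import Mathlib

section
/- For all real numbers r, e, y with y ∈ {-1,+1}, all α > 0, β > 0, and m(x) fixed: the generalized 0-1 loss 1_{m(x)y≤0}1_{r>0} + c_1 1_{ey≤0}1_{r≤0} + c_e 1_{r≤0} is upper bounded by the surrogate L_S = 1_{m(x)y≤0} exp(α r) + c_1 exp((β/2)(-ey - r)) + c_e exp(-r), provided α ≥ 0 and β ≥ 0 are such that exp bounds the corresponding indicators (this holds for all α, β > 0). -/
open Real

lemma ite_one_zero_le_exp {P : Prop} [Decidable P] {z : ℝ} (h : P → 0 ≤ z) :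
    (if P then (1 : ℝ) else 0) ≤ exp z := by
  split_ifs with hP
  · exact one_le_exp (h hP)
  · exact (exp_pos z).le

theorem stmt5_general (r e y mx c1 ce α β : ℝ)
    (hc1 : 0 < c1) (hce : 0 ≤ ce) (hα : 0 < α) (hβ : 0 < β) :
    (if mx * y ≤ 0 then (1:ℝ) else 0) * (if 0 < r then 1 else 0)
      + c1 * (if e * y ≤ 0 then (1:ℝ) else 0) * (if r ≤ 0 then 1 else 0)
      + ce * (if r ≤ 0 then (1:ℝ) else 0)
    ≤ (if mx * y ≤ 0 then (1:ℝ) else 0) * exp (α * r)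
      + c1 * exp ((β / 2) * (-(e * y) - r)) + ce * exp (-r) := by
  have margin : (if 0 < r then (1 : ℝ) else 0) ≤ exp (α * r) :=
    ite_one_zero_le_exp fun hr => mul_nonneg hα.le hr.le
  have joint : (if e * y ≤ 0 then (1 : ℝ) else 0) * (if r ≤ 0 then 1 else 0)
      ≤ exp ((β / 2) * (-(e * y) - r)) := by
    rw [ite_zero_mul_ite_zero, one_mul]
    exact ite_one_zero_le_exp fun ⟨hey, hr⟩ => mul_nonneg (by positivity) (by linarith)
  have abstain : (if r ≤ 0 then (1 : ℝ) else 0) ≤ exp (-r) :=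
    ite_one_zero_le_exp neg_nonneg.mpr
  rw [mul_assoc c1]
  gcongr

/-- The generalized 0-1 loss is upper bounded by the surrogate loss L_S for all α, β > 0. -/
theorem stmt5 (r e y mx c1 ce α β : ℝ) (hy : y = 1 ∨ y = -1)
    (hc1 : 0 < c1) (hce : 0 ≤ ce) (hα : 0 < α) (hβ : 0 < β) :
    (if mx * y ≤ 0 then (1:ℝ) else 0) * (if 0 < r then 1 else 0)
      + c1 * (if e * y ≤ 0 then (1:ℝ) else 0) * (if r ≤ 0 then 1 else 0)
      + ce * (if r ≤ 0 then (1:ℝ) else 0)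
    ≤ (if mx * y ≤ 0 then (1:ℝ) else 0) * exp (α * r)
      + c1 * exp ((β / 2) * (-(e * y) - r)) + ce * exp (-r) :=
  stmt5_general r e y mx c1 ce α β hc1 hce hα hβ
end

section
/- Let c_1 > 0, c_e ≥ 0, P ∈ (c_e, c_e + c_1/2], α = (c_e + 2√((P-c_e)(c_1-(P-c_e))))/P, and η ∈ [0,1]. Then sign of r* = (1/(α+1)) ln((2c_1√(η(1-η)) + c_e)/(αP)) agrees with the sign of r^B = c_1(1/2 - |η - 1/2|) - P + c_e; i.e., r^B ≥ 0 implies r* ≥ 0 and r^B ≤ 0 implies r* ≤ 0. -/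
/-!
Write `q = P - cₑ` and `u = c₁ (1/2 - |η - 1/2|)`, so that `r^B = u - q` and, since
`η (1 - η) = (1/2 - |η - 1/2|) (1/2 + |η - 1/2|)`, the argument of the logarithm in `r*` is
`(2 √(u (c₁ - u)) + cₑ) / (2 √(q (c₁ - q)) + cₑ)`. Both `u` and `q` are at most `c₁/2`, where
`t ↦ t (c₁ - t)` is increasing, so this ratio is `≥ 1` when `u ≥ q` and `≤ 1` when `u ≤ q`.
-/

open Real

lemma mul_sub_le_mul_sub_of_le_of_add_le {a b c : ℝ} (hab : a ≤ b) (habc : a + b ≤ c) :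
    a * (c - a) ≤ b * (c - b) := by
  nlinarith

lemma sqrt_mul_sub_le_sqrt_mul_sub {a b c : ℝ} (hab : a ≤ b) (habc : a + b ≤ c) :
    √(a * (c - a)) ≤ √(b * (c - b)) :=
  sqrt_le_sqrt (mul_sub_le_mul_sub_of_le_of_add_le hab habc)

lemma mul_sqrt_mul_one_sub_eq {c η : ℝ} (hc : 0 ≤ c) :
    c * √(η * (1 - η)) = √(c * (1 / 2 - |η - 1 / 2|) * (c - c * (1 / 2 - |η - 1 / 2|))) := by
  have hη : η * (1 - η) = (1 / 2 - |η - 1 / 2|) * (1 - (1 / 2 - |η - 1 / 2|)) := by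
    nlinarith [sq_abs (η - 1 / 2)]
  rw [← sqrt_sq hc, ← sqrt_mul (sq_nonneg c), sqrt_sq hc, hη]
  ring_nf

theorem stmt14_general (c1 ce P η : ℝ) (hc1 : 0 < c1) (hce : 0 ≤ ce)
    (hPl : ce < P) (hPu : P ≤ ce + c1 / 2)
    (α : ℝ) (hα : α = (ce + 2 * Real.sqrt ((P - ce) * (c1 - (P - ce)))) / P)
    (rstar : ℝ)
    (hrstar : rstar = (1 / (α + 1)) * Real.log ((2 * c1 * Real.sqrt (η * (1 - η)) + ce) / (α * P)))
    (rB : ℝ) (hrB : rB = c1 * (1/2 - |η - 1/2|) - P + ce) :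
    (0 ≤ rB → 0 ≤ rstar) ∧ (rB ≤ 0 → rstar ≤ 0) := by
  set q := P - ce
  set u := c1 * (1 / 2 - |η - 1 / 2|)
  have hP : 0 < P := hce.trans_lt hPl
  have hαP : α * P = 2 * √(q * (c1 - q)) + ce := by rw [hα]; field_simp; ring
  have hs : 0 < √(q * (c1 - q)) := sqrt_pos.mpr (mul_pos (by linarith) (by linarith))
  have hDpos : 0 < α * P := by rw [hαP]; positivity
  have hα1 : 0 ≤ 1 / (α + 1) := by rw [hα]; positivity
  have hnum : 2 * c1 * √(η * (1 - η)) + ce = 2 * √(u * (c1 - u)) + ce := by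
    rw [mul_assoc, mul_sqrt_mul_one_sub_eq hc1.le]
  have hu : u ≤ c1 / 2 :=
    (mul_le_mul_of_nonneg_left (sub_le_self _ (abs_nonneg _)) hc1.le).trans_eq (mul_one_div c1 2)
  refine ⟨fun hB => ?_, fun hB => ?_⟩
  · rw [hrstar]
    refine mul_nonneg hα1 (log_nonneg ?_)
    rw [one_le_div hDpos, hnum, hαP]
    linarith [sqrt_mul_sub_le_sqrt_mul_sub (c := c1) (a := q) (b := u) (by linarith) (by linarith)]
  · rw [hrstar]
    refine mul_nonpos_of_nonneg_of_nonpos hα1 (log_nonpos (by positivity) ?_)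
    rw [div_le_one hDpos, hnum, hαP]
    linarith [sqrt_mul_sub_le_sqrt_mul_sub (c := c1) (a := u) (b := q) (by linarith) (by linarith)]

/-- In the intermediate case ce < P ≤ ce + c1/2, with the calibrated choice of α,
the sign of r* agrees with the sign of the Bayes rejection score r^B. -/
theorem stmt14 (c1 ce P η : ℝ) (hc1 : 0 < c1) (hce : 0 ≤ ce)
    (hPl : ce < P) (hPu : P ≤ ce + c1 / 2) (hη0 : 0 ≤ η) (hη1 : η ≤ 1)
    (α : ℝ) (hα : α = (ce + 2 * Real.sqrt ((P - ce) * (c1 - (P - ce)))) / P)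
    (rstar : ℝ)
    (hrstar : rstar = (1 / (α + 1)) * Real.log ((2 * c1 * Real.sqrt (η * (1 - η)) + ce) / (α * P)))
    (rB : ℝ) (hrB : rB = c1 * (1/2 - |η - 1/2|) - P + ce) :
    (0 ≤ rB → 0 ≤ rstar) ∧ (rB ≤ 0 → rstar ≤ 0) :=
  stmt14_general c1 ce P η hc1 hce hPl hPu α hα rstar hrstar rB hrB
end
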